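/- arXiv:1806.08537 — 3 statements merged into one kernel-verified Lean document; each statement's English description precedes it below -/
import Mathlib

section
/- (Robbins–Siegmund-type supermartingale convergence) Let (Ω, F, P) be a probability space and {F_k}_{k≥1} an increasing sequence of sub-σ-algebras of F. Let {h_k}, {v_k}, {w_k} be sequences of integrable real random variables such that h_k, v_k, w_k are F_k-measurable for each k, v_k ≥ 0 and w_k ≥ 0 for all k, ∑_{k=1}^∞ w_k < ∞ almost surely, and {h_k} is uniformly bounded from below by a constant. Suppose there are constants η_k ≥ 0 with ∑_{k=1}^∞ η_k < ∞ such that, with probability one, E[h_{k+1} | F_k] ≤ (1 + η_k) h_k − v_k + w_k for all k ≥ 1. Then h_k converges almost surely to a finite random variable and ∑_{k=1}^∞ v_k < ∞ almost surely. -/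
/-!
Dividing by the compound factor `A n = ∏ j ∈ range n, (1 + η j)` removes the multiplicative
error: `Y n = X n / A n + ∑ j ∈ range n, (V j - W j) / A (j + 1)` is a supermartingale. It is
bounded below by the predictable process `-∑ j ∈ range n, W j / A (j + 1)`; stopping `Y` when
this bound first drops below `-a` leaves a supermartingale bounded below, hence convergent, and on
`{∑ W < ∞}` some level `a` is never reached. As `A` converges to a finite limit `≥ 1`, the
convergence of `Y` forces `∑ V / A < ∞`, hence `∑ V < ∞`, and then the convergence of `X`.
The theorem is the case `X k = h (k + 1) - min C 0`, shifted by one index so that the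
recursion holds from `0` on.
-/

open MeasureTheory Filter Finset
open scoped Topology

namespace MeasureTheory

variable {Ω : Type*} {m0 : MeasurableSpace Ω} {μ : Measure Ω} {ℱ : Filtration ℕ m0}
  {f : ℕ → Ω → ℝ}

theorem condExp_smul_add_of_stronglyMeasurable {m : MeasurableSpace Ω} (hm : m ≤ m0)
    [SigmaFinite (μ.trim hm)] (c : ℝ) {u v : Ω → ℝ} (hu : Integrable u μ)
    (hv : StronglyMeasurable[m] v) (hvi : Integrable v μ) :
    μ[c • u + v | m] =ᵐ[μ] c • μ[u | m] + v := by
  filter_upwards [condExp_add (hu.smul c) hvi m, condExp_smul c u m] with ω h₁ h₂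
  rw [h₁, Pi.add_apply, h₂, condExp_of_stronglyMeasurable hm hv hvi, Pi.add_apply]

theorem Submartingale.exists_ae_tendsto_of_le [IsFiniteMeasure μ] (hf : Submartingale f ℱ μ)
    {a : ℝ} (hfa : ∀ n, ∀ᵐ ω ∂μ, f n ω ≤ a) :
    ∀ᵐ ω ∂μ, ∃ c, Tendsto (fun n => f n ω) atTop (𝓝 c) := by
  -- centring at the average of `f 0` makes every `∫ (f n - c₀)` nonnegative
  set c₀ := ⨍ ω, f 0 ω ∂μ
  have hg : Submartingale (fun n ω => f n ω - c₀) ℱ μ :=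
    hf.sub_martingale (martingale_const ℱ μ c₀)
  have hL1 : ∀ n, eLpNorm (fun ω => f n ω - c₀) 1 μ ≤
      (2 * μ Set.univ * ENNReal.ofReal (a - c₀)).toNNReal := by
    intro n
    rw [ENNReal.coe_toNNReal (by finiteness)]
    refine eLpNorm_one_le_of_le' (hg.integrable n) ?_
      ((hfa n).mono fun ω hω => sub_le_sub_right hω c₀)
    have hmono := hf.setIntegral_le (Nat.zero_le n) MeasurableSet.univ
    rw [setIntegral_univ, setIntegral_univ] at hmono
    rw [integral_sub (hf.integrable n) (integrable_const _), integral_const, measure_smul_average]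
    linarith
  filter_upwards [hg.exists_ae_tendsto_of_bdd hL1] with ω ⟨c, hc⟩
  exact ⟨c + c₀, by simpa using hc.add_const c₀⟩

/-- The partial sums are predictable, so they are still `≤ a` at the first time `n` with
`∑ j ∈ range (n + 1), W j > a`. -/
theorem stoppedProcess_hittingAfter_sum_le {W : ℕ → Ω → ℝ}
    (hfW : ∀ n ω, f n ω ≤ ∑ j ∈ range n, W j ω) {a : ℝ} (ha : 0 ≤ a) (n : ℕ) (ω : Ω) :
    stoppedProcess f (hittingAfter (fun n ω => ∑ j ∈ range (n + 1), W j ω) (Set.Ioi a) 0) n ω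
      ≤ a := by
  set τ := hittingAfter (fun n ω => ∑ j ∈ range (n + 1), W j ω) (Set.Ioi a) 0
  have hsum : ∀ k : ℕ, (k : ℕ∞) ≤ τ ω → ∑ j ∈ range k, W j ω ≤ a := by
    rintro (_ | k) hk
    · simpa using ha
    · have hlt : (k : ℕ∞) < τ ω := lt_of_lt_of_le (by exact_mod_cast k.lt_succ_self) hk
      simpa using notMem_of_lt_hittingAfter hlt (Nat.zero_le k)
  rcases le_total (n : ℕ∞) (τ ω) with hn | hn
  · rw [stoppedProcess_eq_of_le hn]
    exact (hfW n ω).trans (hsum n hn)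
  · lift τ ω to ℕ using ne_top_of_le_ne_top (ENat.natCast_ne_top n) hn with k hk
    rw [stoppedProcess_eq_of_ge (hk ▸ hn), ← hk]
    exact (hfW k ω).trans (hsum k le_rfl)

theorem Submartingale.exists_tendsto_of_le_sum [IsFiniteMeasure μ] {W : ℕ → Ω → ℝ}
    (hf : Submartingale f ℱ μ) (hW : Adapted ℱ W)
    (hfW : ∀ n ω, f n ω ≤ ∑ j ∈ range n, W j ω) :
    ∀ᵐ ω ∂μ, BddAbove (Set.range fun n => ∑ j ∈ range n, W j ω) →
      ∃ c, Tendsto (fun n => f n ω) atTop (𝓝 c) := by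
  set S : ℕ → Ω → ℝ := fun n ω => ∑ j ∈ range (n + 1), W j ω
  set τ : ℕ → Ω → ℕ∞ := fun a => hittingAfter S (Set.Ioi a) 0
  have hS : Adapted ℱ S := fun n =>
    Finset.measurable_sum _ fun j hj => hW.measurable_le (Nat.lt_succ_iff.1 (mem_range.1 hj))
  have hconv : ∀ᵐ ω ∂μ, ∀ a : ℕ, ∃ c,
      Tendsto (fun n => stoppedProcess f (τ a) n ω) atTop (𝓝 c) :=
    ae_all_iff.2 fun a =>
      (hf.stoppedProcess (hS.isStoppingTime_hittingAfter measurableSet_Ioi)).exists_ae_tendsto_of_le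
        fun n => ae_of_all _ (stoppedProcess_hittingAfter_sum_le hfW a.cast_nonneg n)
  filter_upwards [hconv] with ω hω ⟨b, hb⟩
  obtain ⟨a, ha⟩ := exists_nat_ge b
  have hτ : τ a ω = ⊤ := hittingAfter_eq_top_iff.2 fun j _ =>
    not_lt.2 ((hb ⟨j + 1, rfl⟩).trans ha)
  have hstop : ∀ n, stoppedProcess f (τ a) n ω = f n ω := fun n =>
    stoppedProcess_eq_of_le (hτ ▸ le_top)
  simpa only [hstop] using hω a

namespace AlmostSupermartingale

variable {η : ℕ → ℝ}

noncomputable def compoundFactor (η : ℕ → ℝ) (n : ℕ) : ℝ := ∏ j ∈ range n, (1 + η j)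

theorem one_le_compoundFactor (hη : ∀ n, 0 ≤ η n) (n : ℕ) : 1 ≤ compoundFactor η n :=
  Finset.one_le_prod fun j _ => le_add_of_nonneg_right (hη j)

theorem compoundFactor_pos (hη : ∀ n, 0 ≤ η n) (n : ℕ) : 0 < compoundFactor η n :=
  zero_lt_one.trans_le (one_le_compoundFactor hη n)

theorem compoundFactor_succ (η : ℕ → ℝ) (n : ℕ) :
    compoundFactor η (n + 1) = compoundFactor η n * (1 + η n) :=
  prod_range_succ _ n

theorem exists_tendsto_compoundFactor (hη : Summable η) :
    ∃ L, Tendsto (compoundFactor η) atTop (𝓝 L) :=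
  ⟨_, (Real.multipliable_one_add_of_summable hη).hasProd.tendsto_prod_nat⟩

noncomputable def compensatedProcess (X V W : ℕ → Ω → ℝ) (η : ℕ → ℝ) (n : ℕ) (ω : Ω) : ℝ :=
  X n ω / compoundFactor η n + ∑ j ∈ range n, V j ω / compoundFactor η (j + 1) -
    ∑ j ∈ range n, W j ω / compoundFactor η (j + 1)

variable {X V W : ℕ → Ω → ℝ}

theorem compensatedProcess_eq (hη : ∀ n, 0 ≤ η n) (n : ℕ) (ω : Ω) :
    compensatedProcess X V W η n ω =
      (compoundFactor η (n + 1))⁻¹ * ((1 + η n) * X n ω - V n ω + W n ω) +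
        (∑ j ∈ range (n + 1), V j ω / compoundFactor η (j + 1) -
          ∑ j ∈ range (n + 1), W j ω / compoundFactor η (j + 1)) := by
  have hA := (compoundFactor_pos hη n).ne'
  have hη' : 1 + η n ≠ 0 := (add_pos_of_pos_of_nonneg one_pos (hη n)).ne'
  rw [compensatedProcess, sum_range_succ, sum_range_succ, compoundFactor_succ]
  field_simp
  ring

theorem supermartingale_compensatedProcess [IsFiniteMeasure μ] (hX : Adapted ℱ X)
    (hV : Adapted ℱ V) (hW : Adapted ℱ W) (hXi : ∀ n, Integrable (X n) μ)
    (hVi : ∀ n, Integrable (V n) μ) (hWi : ∀ n, Integrable (W n) μ) (hη : ∀ n, 0 ≤ η n)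
    (hstep : ∀ n, μ[X (n + 1) | ℱ n] ≤ᵐ[μ] fun ω => (1 + η n) * X n ω - V n ω + W n ω) :
    Supermartingale (compensatedProcess X V W η) ℱ μ := by
  set B : ℕ → Ω → ℝ := fun n ω => ∑ j ∈ range n, V j ω / compoundFactor η (j + 1) -
    ∑ j ∈ range n, W j ω / compoundFactor η (j + 1)
  have hB : ∀ {n m}, n ≤ m + 1 → Measurable[ℱ m] (B n) := fun {n m} hnm => by
    have hjm : ∀ j ∈ range n, j ≤ m := fun j hj => by have := mem_range.1 hj; omega
    exact (Finset.measurable_sum _ fun j hj => (hV.measurable_le (hjm j hj)).div_const _).sub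
      (Finset.measurable_sum _ fun j hj => (hW.measurable_le (hjm j hj)).div_const _)
  have hBi : ∀ n, Integrable (B n) μ := fun n =>
    (integrable_finsetSum _ fun j _ => (hVi j).div_const _).sub
      (integrable_finsetSum _ fun j _ => (hWi j).div_const _)
  have hY : ∀ n, compensatedProcess X V W η n = (compoundFactor η n)⁻¹ • X n + B n := by
    intro n; ext ω; simp [compensatedProcess, B, div_eq_inv_mul, add_sub_assoc]
  refine supermartingale_nat (fun n => ?_) (fun n => ?_) fun n => ?_
  · rw [hY]
    exact (((hX n).const_smul _).add (hB n.le_succ)).stronglyMeasurable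
  · rw [hY]
    exact ((hXi n).smul _).add (hBi n)
  · rw [hY]
    filter_upwards [condExp_smul_add_of_stronglyMeasurable (ℱ.le n) _ (hXi (n + 1))
      (hB le_rfl).stronglyMeasurable (hBi (n + 1)), hstep n] with ω h₁ h₂
    rw [h₁, compensatedProcess_eq hη]
    exact add_le_add_left (mul_le_mul_of_nonneg_left h₂
      (inv_nonneg.2 (compoundFactor_pos hη _).le)) _

theorem summable_div_compoundFactor (hη : ∀ n, 0 ≤ η n) {w : ℕ → ℝ} (hw : ∀ n, 0 ≤ w n)
    (hws : Summable w) : Summable fun j => w j / compoundFactor η (j + 1) :=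
  hws.of_nonneg_of_le (fun j => div_nonneg (hw j) (compoundFactor_pos hη _).le)
    fun j => div_le_self (hw j) (one_le_compoundFactor hη _)

theorem tendsto_and_summable_of_tendsto_compensatedProcess (hη : ∀ n, 0 ≤ η n)
    (hηs : Summable η) {ω : Ω} (hX : ∀ n, 0 ≤ X n ω) (hV : ∀ n, 0 ≤ V n ω)
    (hW : ∀ n, 0 ≤ W n ω) (hWs : Summable fun n => W n ω)
    (hY : ∃ c, Tendsto (fun n => compensatedProcess X V W η n ω) atTop (𝓝 c)) :
    (∃ l, Tendsto (fun n => X n ω) atTop (𝓝 l)) ∧ Summable fun n => V n ω := by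
  have hA : ∀ n, 0 < compoundFactor η n := compoundFactor_pos hη
  obtain ⟨L, hL⟩ := exists_tendsto_compoundFactor hηs
  obtain ⟨c, hc⟩ := hY
  have hWs' := summable_div_compoundFactor hη hW hWs
  have hVs' : Summable fun j => V j ω / compoundFactor η (j + 1) := by
    obtain ⟨b, hb⟩ := (hc.add hWs'.hasSum.tendsto_sum_nat).bddAbove_range
    refine summable_of_sum_range_le (c := b) (fun j => div_nonneg (hV j) (hA _).le) fun n => ?_
    have hXA := div_nonneg (hX n) (hA n).le
    have := hb ⟨n, rfl⟩
    simp only [compensatedProcess] at this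
    linarith
  refine ⟨⟨L * (c + ∑' j, W j ω / compoundFactor η (j + 1) -
      ∑' j, V j ω / compoundFactor η (j + 1)), ?_⟩, ?_⟩
  · refine (hL.mul ((hc.add hWs'.hasSum.tendsto_sum_nat).sub hVs'.hasSum.tendsto_sum_nat)).congr
      fun n => ?_
    rw [compensatedProcess, sub_add_cancel, add_sub_cancel_right, mul_div_cancel₀ _ (hA n).ne']
  · obtain ⟨B, hB⟩ := hL.bddAbove_range
    refine (hVs'.mul_left B).of_nonneg_of_le hV fun j => ?_
    calc V j ω = compoundFactor η (j + 1) * (V j ω / compoundFactor η (j + 1)) :=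
          (mul_div_cancel₀ _ (hA _).ne').symm
      _ ≤ B * (V j ω / compoundFactor η (j + 1)) :=
        mul_le_mul_of_nonneg_right (hB ⟨j + 1, rfl⟩) (div_nonneg (hV j) (hA _).le)

theorem exists_tendsto_and_summable [IsFiniteMeasure μ] (hX : Adapted ℱ X)
    (hV : Adapted ℱ V) (hW : Adapted ℱ W) (hXi : ∀ n, Integrable (X n) μ)
    (hVi : ∀ n, Integrable (V n) μ) (hWi : ∀ n, Integrable (W n) μ)
    (hX0 : ∀ n ω, 0 ≤ X n ω) (hV0 : ∀ n ω, 0 ≤ V n ω) (hW0 : ∀ n ω, 0 ≤ W n ω)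
    (hη : ∀ n, 0 ≤ η n) (hηs : Summable η)
    (hstep : ∀ n, μ[X (n + 1) | ℱ n] ≤ᵐ[μ] fun ω => (1 + η n) * X n ω - V n ω + W n ω) :
    ∀ᵐ ω ∂μ, Summable (fun n => W n ω) →
      (∃ l, Tendsto (fun n => X n ω) atTop (𝓝 l)) ∧ Summable fun n => V n ω := by
  have hsub := (supermartingale_compensatedProcess hX hV hW hXi hVi hWi hη hstep).neg
  have hlow : ∀ n ω, -(compensatedProcess X V W η n ω) ≤
      ∑ j ∈ range n, W j ω / compoundFactor η (j + 1) := fun n ω => by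
    have hXA := div_nonneg (hX0 n ω) (compoundFactor_pos hη n).le
    have hVA := sum_nonneg fun j (_ : j ∈ range n) =>
      div_nonneg (hV0 j ω) (compoundFactor_pos hη (j + 1)).le
    simp only [compensatedProcess]
    linarith
  filter_upwards [hsub.exists_tendsto_of_le_sum (fun j => (hW j).div_const _) hlow]
    with ω hconv hWs
  obtain ⟨c, hc⟩ :=
    hconv (summable_div_compoundFactor hη (hW0 · ω) hWs).hasSum.tendsto_sum_nat.bddAbove_range
  exact tendsto_and_summable_of_tendsto_compensatedProcess hη hηs (hX0 · ω) (hV0 · ω) (hW0 · ω)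
    hWs ⟨-c, by simpa using hc.neg⟩

end AlmostSupermartingale

end MeasureTheory

/-- Robbins–Siegmund-type supermartingale convergence:
If `{h_k}` is integrable, adapted, uniformly bounded below, `v_k, w_k ≥ 0` are adapted with
`∑ w_k < ∞` a.s., `η_k ≥ 0` with `∑ η_k < ∞`, and almost surely
`E[h_{k+1} | F_k] ≤ (1 + η_k) h_k − v_k + w_k` for each `k ≥ 1`, then `h_k` converges a.s.
to a finite limit and `∑ v_k < ∞` a.s. -/
theorem robbins_siegmund_supermartingale_convergence
    {Ω : Type*} [inst : MeasurableSpace Ω] (μ : Measure Ω) [IsProbabilityMeasure μ]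
    (F : ℕ → MeasurableSpace Ω) (hFmono : Monotone F) (hFle : ∀ k, F k ≤ inst)
    (h v w : ℕ → Ω → ℝ) (η : ℕ → ℝ)
    (hint : ∀ k, Integrable (h k) μ)
    (vint : ∀ k, Integrable (v k) μ)
    (wint : ∀ k, Integrable (w k) μ)
    (hmeas : ∀ k, Measurable[F k] (h k))
    (vmeas : ∀ k, Measurable[F k] (v k))
    (wmeas : ∀ k, Measurable[F k] (w k))
    (hvnonneg : ∀ k ω, 0 ≤ v k ω)
    (hwnonneg : ∀ k ω, 0 ≤ w k ω)
    (hwsum : ∀ᵐ ω ∂μ, Summable fun k => w k ω)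
    (hbddbelow : ∃ C : ℝ, ∀ k ω, C ≤ h k ω)
    (hηnonneg : ∀ k, 0 ≤ η k) (hηsum : Summable η)
    (hineq : ∀ k, 1 ≤ k →
      ∀ᵐ ω ∂μ, (μ[h (k + 1) | F k]) ω ≤ (1 + η k) * h k ω - v k ω + w k ω) :
    ∀ᵐ ω ∂μ, (∃ l : ℝ, Tendsto (fun k => h k ω) atTop (𝓝 l)) ∧
      Summable (fun k => v k ω) := by
  obtain ⟨C, hC⟩ := hbddbelow
  set c := min C 0
  let 𝒢 : Filtration ℕ inst :=
    ⟨fun n => F (n + 1), fun _ _ hnm => hFmono (by omega), fun _ => hFle _⟩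
  have hstep : ∀ n, μ[fun ω => h (n + 2) ω - c | 𝒢 n] ≤ᵐ[μ]
      fun ω => (1 + η (n + 1)) * (h (n + 1) ω - c) - v (n + 1) ω + w (n + 1) ω := fun n => by
    filter_upwards [condExp_sub (hint (n + 2)) (integrable_const c) (𝒢 n),
      hineq (n + 1) (by omega)] with ω hsub hω
    have hηc : η (n + 1) * c ≤ 0 := mul_nonpos_of_nonneg_of_nonpos (hηnonneg _) (min_le_right _ _)
    change μ[h (n + 2) - fun _ => c | 𝒢 n] ω ≤ _
    rw [hsub, Pi.sub_apply, condExp_const (𝒢.le n)]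
    linarith
  have hconv := AlmostSupermartingale.exists_tendsto_and_summable (ℱ := 𝒢)
    (fun n => (hmeas (n + 1)).sub_const c) (fun n => vmeas (n + 1)) (fun n => wmeas (n + 1))
    (fun n => (hint (n + 1)).sub (integrable_const c)) (fun n => vint (n + 1))
    (fun n => wint (n + 1)) (fun n ω => sub_nonneg.2 ((min_le_left _ _).trans (hC _ ω)))
    (fun n => hvnonneg (n + 1)) (fun n => hwnonneg (n + 1)) (fun n => hηnonneg (n + 1))
    ((summable_nat_add_iff 1).2 hηsum) hstep
  filter_upwards [hconv, hwsum] with ω hω hwω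
  obtain ⟨⟨l, hl⟩, hv⟩ := hω ((summable_nat_add_iff 1).2 hwω)
  exact ⟨⟨l + c, (tendsto_add_atTop_iff_nat 1).1 (by simpa using hl.add_const c)⟩,
    (summable_nat_add_iff 1).1 hv⟩
end

section
/- (Geometric consensus of products of doubly stochastic matrices) Let n ≥ 2, let 0 < η < 1, and let {W_k}_{k≥0} be a sequence of n×n doubly stochastic matrices with nonnegative entries such that for every k: (i) every diagonal entry of W_k is at least η, (ii) every positive entry of W_k is at least η, and (iii) there is an integer κ ≥ 1 such that for every k and every pair (i, j) there exists t ∈ {k, ..., k+κ−1} with (W_t)_{ij} ≥ η. Set K₀ = (n−1)κ, β = (1 − η^{K₀})^{1/K₀}, and λ = 2(1 + η^{−K₀})/(1 − η^{K₀}), and for k ≥ s define the transition matrix Ψ_{k,s} = W_k W_{k−1} ⋯ W_s. Then for all k > s ≥ 0 and all indices i, j, |[Ψ_{k,s}]_{ij} − 1/n| ≤ λ β^{k−s}. -/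
open scoped BigOperators

/-- The transition matrix `Ψ_{k,s} = W_k W_{k-1} ⋯ W_s` (for `k ≥ s`). -/
noncomputable def transitionMatrix {n : ℕ} (W : ℕ → Matrix (Fin n) (Fin n) ℝ)
    (k s : ℕ) : Matrix (Fin n) (Fin n) ℝ :=
  (((List.range (k - s + 1)).map fun t => W (k - t))).prod

section TMAux

variable {n : ℕ} (W : ℕ → Matrix (Fin n) (Fin n) ℝ)

lemma tm_self (s : ℕ) : transitionMatrix W s s = W s := by
  unfold transitionMatrix
  rw [show s - s + 1 = 1 from by omega, List.range_succ, List.range_zero]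
  simp

lemma tm_succ {s k : ℕ} (h : s ≤ k) :
    transitionMatrix W (k+1) s = W (k+1) * transitionMatrix W k s := by
  unfold transitionMatrix
  rw [show k + 1 - s + 1 = (k - s + 1) + 1 from by omega]
  rw [List.range_succ_eq_map]
  simp [List.map_map, Function.comp_def, Nat.succ_sub_succ]

lemma tm_split {s m k : ℕ} (hs : s ≤ m) (hk : m < k) :
    transitionMatrix W k s = transitionMatrix W k (m+1) * transitionMatrix W m s := by
  induction k, hk using Nat.le_induction with
  | base => rw [tm_self, tm_succ W hs]
  | succ k hk ih =>
      rw [tm_succ W (le_trans hs (by omega)), ih, tm_succ W (by omega), Matrix.mul_assoc]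

lemma tm_nonneg (h0 : ∀ k i j, 0 ≤ W k i j) {s k : ℕ} (h : s ≤ k) :
    ∀ i j : Fin n, 0 ≤ transitionMatrix W k s i j := by
  induction k, h using Nat.le_induction with
  | base => intro i j; rw [tm_self]; exact h0 s i j
  | succ k hk ih =>
      intro i j
      rw [tm_succ W hk, Matrix.mul_apply]
      exact Finset.sum_nonneg fun c _ => mul_nonneg (h0 _ i c) (ih c j)

lemma tm_row (h1 : ∀ k i, ∑ j, W k i j = 1) {s k : ℕ} (h : s ≤ k) :
    ∀ i : Fin n, ∑ j, transitionMatrix W k s i j = 1 := by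
  induction k, h using Nat.le_induction with
  | base => intro i; rw [tm_self]; exact h1 s i
  | succ k hk ih =>
      intro i
      rw [tm_succ W hk]
      simp only [Matrix.mul_apply]
      rw [Finset.sum_comm]
      calc ∑ c, ∑ j, W (k+1) i c * transitionMatrix W k s c j
          = ∑ c, W (k+1) i c * ∑ j, transitionMatrix W k s c j := by
            simp [Finset.mul_sum]
        _ = 1 := by simp only [ih]; simpa using h1 (k+1) i

lemma tm_col (h1 : ∀ k j, ∑ i, W k i j = 1) {s k : ℕ} (h : s ≤ k) :
    ∀ j : Fin n, ∑ i, transitionMatrix W k s i j = 1 := by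
  induction k, h using Nat.le_induction with
  | base => intro j; rw [tm_self]; exact h1 s j
  | succ k hk ih =>
      intro j
      rw [tm_succ W hk]
      simp only [Matrix.mul_apply]
      rw [Finset.sum_comm]
      calc ∑ c, ∑ i, W (k+1) i c * transitionMatrix W k s c j
          = ∑ c, (∑ i, W (k+1) i c) * transitionMatrix W k s c j := by
            simp [Finset.sum_mul]
        _ = 1 := by simp only [h1]; simpa using ih j

lemma mul_entry_le {A B : Matrix (Fin n) (Fin n) ℝ}
    (hA : ∀ i j, 0 ≤ A i j) (hB : ∀ i j, 0 ≤ B i j) (i j c : Fin n) :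
    A i c * B c j ≤ (A * B) i j := by
  rw [Matrix.mul_apply]
  exact Finset.single_le_sum (fun c' _ => mul_nonneg (hA i c') (hB c' j)) (Finset.mem_univ c)

variable {η : ℝ}

lemma tm_diag (hη : 0 ≤ η) (h0 : ∀ k i j, 0 ≤ W k i j) (hd : ∀ k i, η ≤ W k i i)
    {a b : ℕ} (hab : a ≤ b) (i : Fin n) :
    η ^ (b - a + 1) ≤ transitionMatrix W b a i i := by
  induction b, hab using Nat.le_induction with
  | base => rw [tm_self]; simpa using hd a i
  | succ b hb ih =>
      rw [tm_succ W hb]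
      calc η ^ (b + 1 - a + 1) = η * η ^ (b - a + 1) := by
            rw [← pow_succ']; congr 1; omega
        _ ≤ W (b+1) i i * transitionMatrix W b a i i :=
            mul_le_mul (hd (b+1) i) ih (pow_nonneg hη _) (le_trans hη (hd (b+1) i))
        _ ≤ (W (b+1) * transitionMatrix W b a) i i :=
            mul_entry_le (h0 (b+1)) (fun i' j' => tm_nonneg W h0 hb i' j') i i i

lemma tm_entry_pos (hη : 0 ≤ η) (h0 : ∀ k i j, 0 ≤ W k i j) (hd : ∀ k i, η ≤ W k i i)
    {a t : ℕ} (hat : a ≤ t) {i j : Fin n} (hW : η ≤ W t i j) :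
    η ^ (t - a + 1) ≤ transitionMatrix W t a i j := by
  rcases eq_or_lt_of_le hat with h | h
  · subst h; rw [tm_self]; simpa using hW
  · obtain ⟨t', rfl⟩ : ∃ t', t = t' + 1 := ⟨t - 1, by omega⟩
    rw [tm_succ W (by omega)]
    calc η ^ (t' + 1 - a + 1) = η * η ^ (t' - a + 1) := by
          rw [← pow_succ']; congr 1; omega
      _ ≤ W (t'+1) i j * transitionMatrix W t' a j j :=
          mul_le_mul hW (tm_diag W hη h0 hd (by omega) j) (pow_nonneg hη _) (le_trans hη hW)
      _ ≤ (W (t'+1) * transitionMatrix W t' a) i j :=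
          mul_entry_le (h0 (t'+1)) (fun i' j' => tm_nonneg W h0 (by omega) i' j') i j j

lemma tm_block_pos (hη : 0 ≤ η) (h0 : ∀ k i j, 0 ≤ W k i j) (hd : ∀ k i, η ≤ W k i i)
    {K κ : ℕ} (hκK : κ ≤ K) (hκ : 1 ≤ κ)
    (hconn : ∀ k (i j : Fin n), ∃ t, k ≤ t ∧ t < k + κ ∧ η ≤ W t i j)
    (a : ℕ) (i j : Fin n) :
    η ^ K ≤ transitionMatrix W (a + K - 1) a i j := by
  obtain ⟨t, hat, htκ, hW⟩ := hconn a i j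
  have htb : t ≤ a + K - 1 := by omega
  rcases eq_or_lt_of_le htb with h | h
  · rw [← h]
    have := tm_entry_pos W hη h0 hd hat hW
    rwa [show t - a + 1 = K from by omega] at this
  · rw [tm_split W hat h]
    calc η ^ K = η ^ (a + K - 1 - (t + 1) + 1) * η ^ (t - a + 1) := by
          rw [← pow_add]; congr 1; omega
      _ ≤ transitionMatrix W (a + K - 1) (t+1) i i * transitionMatrix W t a i j :=
          mul_le_mul (tm_diag W hη h0 hd (by omega) i) (tm_entry_pos W hη h0 hd hat hW)
            (pow_nonneg hη _) (tm_nonneg W h0 (by omega) i i)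
      _ ≤ _ := mul_entry_le (fun i' j' => tm_nonneg W h0 (by omega) i' j')
            (fun i' j' => tm_nonneg W h0 hat i' j') i j i

lemma mulVec_le_sup (hne : (Finset.univ : Finset (Fin n)).Nonempty)
    {P : Matrix (Fin n) (Fin n) ℝ} (h0 : ∀ i j, 0 ≤ P i j) (h1 : ∀ i, ∑ j, P i j = 1)
    (x : Fin n → ℝ) (i : Fin n) :
    P.mulVec x i ≤ Finset.univ.sup' hne x := by
  simp only [Matrix.mulVec, dotProduct]
  calc ∑ j, P i j * x j ≤ ∑ j, P i j * Finset.univ.sup' hne x :=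
        Finset.sum_le_sum fun j _ =>
          mul_le_mul_of_nonneg_left (Finset.le_sup' x (Finset.mem_univ j)) (h0 i j)
    _ = Finset.univ.sup' hne x := by rw [← Finset.sum_mul, h1, one_mul]

lemma inf_le_mulVec (hne : (Finset.univ : Finset (Fin n)).Nonempty)
    {P : Matrix (Fin n) (Fin n) ℝ} (h0 : ∀ i j, 0 ≤ P i j) (h1 : ∀ i, ∑ j, P i j = 1)
    (x : Fin n → ℝ) (i : Fin n) :
    Finset.univ.inf' hne x ≤ P.mulVec x i := by
  simp only [Matrix.mulVec, dotProduct]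
  calc Finset.univ.inf' hne x = ∑ j, P i j * Finset.univ.inf' hne x := by
        rw [← Finset.sum_mul, h1, one_mul]
    _ ≤ ∑ j, P i j * x j :=
        Finset.sum_le_sum fun j _ =>
          mul_le_mul_of_nonneg_left (Finset.inf'_le x (Finset.mem_univ j)) (h0 i j)

lemma osc_contract (hne : (Finset.univ : Finset (Fin n)).Nonempty)
    {P : Matrix (Fin n) (Fin n) ℝ} {δ : ℝ} (hδ : 0 ≤ δ)
    (hP : ∀ i j, δ ≤ P i j) (h1 : ∀ i, ∑ j, P i j = 1) (x : Fin n → ℝ) :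
    Finset.univ.sup' hne (P.mulVec x) - Finset.univ.inf' hne (P.mulVec x) ≤
      (1 - δ) * (Finset.univ.sup' hne x - Finset.univ.inf' hne x) := by
  set M := Finset.univ.sup' hne x with hM
  set m := Finset.univ.inf' hne x with hm
  have h0 : ∀ i j, (0:ℝ) ≤ P i j := fun i j => le_trans hδ (hP i j)
  have hmM : m ≤ M := by
    obtain ⟨i0, hi0⟩ := hne
    exact le_trans (Finset.inf'_le x hi0) (Finset.le_sup' x hi0)
  obtain ⟨j0, _, hj0⟩ := Finset.exists_mem_eq_inf' hne x
  have hup : ∀ i, P.mulVec x i ≤ M - δ * (M - m) := by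
    intro i
    simp only [Matrix.mulVec, dotProduct]
    have key : ∑ j, P i j * x j = (∑ j, P i j * M) - ∑ j, P i j * (M - x j) := by
      rw [← Finset.sum_sub_distrib]; apply Finset.sum_congr rfl; intro j _; ring
    rw [key, ← Finset.sum_mul, h1, one_mul]
    have hsingle : P i j0 * (M - x j0) ≤ ∑ j, P i j * (M - x j) :=
      Finset.single_le_sum (fun j _ => mul_nonneg (h0 i j)
        (sub_nonneg.2 (Finset.le_sup' x (Finset.mem_univ j)))) (Finset.mem_univ j0)
    have : δ * (M - m) ≤ P i j0 * (M - x j0) := by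
      rw [← hj0]
      exact mul_le_mul_of_nonneg_right (hP i j0) (sub_nonneg.2 hmM)
    linarith
  have hlo : ∀ i, m ≤ P.mulVec x i := inf_le_mulVec hne h0 h1 x
  have hs : Finset.univ.sup' hne (P.mulVec x) ≤ M - δ * (M - m) :=
    Finset.sup'_le hne _ fun i _ => hup i
  have hi : m ≤ Finset.univ.inf' hne (P.mulVec x) :=
    Finset.le_inf' hne _ fun i _ => hlo i
  nlinarith [hs, hi]

end TMAux

/-- Geometric consensus of products of doubly stochastic matrices:
under the connectivity and lower-bound hypotheses, with `K₀ = (n−1)κ`,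
`β = (1 − η^{K₀})^{1/K₀}` and `λ = 2(1 + η^{−K₀})/(1 − η^{K₀})`, every entry of
`Ψ_{k,s}` is within `λ β^{k−s}` of `1/n` for `k > s`. -/
theorem transition_matrix_geometric_consensus
    (n : ℕ) (hn : 2 ≤ n) (η : ℝ) (hη0 : 0 < η) (hη1 : η < 1)
    (W : ℕ → Matrix (Fin n) (Fin n) ℝ)
    (hWnonneg : ∀ k i j, 0 ≤ W k i j)
    (hWrow : ∀ k i, ∑ j, W k i j = 1)
    (hWcol : ∀ k j, ∑ i, W k i j = 1)
    (hWdiag : ∀ k i, η ≤ W k i i)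
    (hWpos : ∀ k i j, 0 < W k i j → η ≤ W k i j)
    (κ : ℕ) (hκ : 1 ≤ κ)
    (hconn : ∀ k (i j : Fin n), ∃ t, k ≤ t ∧ t < k + κ ∧ η ≤ W t i j) :
    ∀ k s : ℕ, s < k → ∀ i j : Fin n,
      |transitionMatrix W k s i j - 1 / (n : ℝ)| ≤
        (2 * (1 + (η ^ ((n - 1) * κ))⁻¹) / (1 - η ^ ((n - 1) * κ))) *
          ((1 - η ^ ((n - 1) * κ)) ^ ((((n - 1) * κ : ℕ) : ℝ)⁻¹)) ^ (k - s) := by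
  intro k s hsk i j
  haveI : NeZero n := ⟨by omega⟩
  have hne : (Finset.univ : Finset (Fin n)).Nonempty := Finset.univ_nonempty
  obtain ⟨K, hKdef⟩ : ∃ K, K = (n - 1) * κ := ⟨_, rfl⟩
  rw [← hKdef]
  have hK1 : 1 ≤ K := by
    rw [hKdef]
    have h1 : 1 ≤ n - 1 := by omega
    calc 1 = 1 * 1 := by ring
      _ ≤ (n-1) * κ := Nat.mul_le_mul h1 hκ
  set δ : ℝ := η ^ K with hδdef
  have hδ0 : 0 < δ := pow_pos hη0 K
  have hδ1 : δ < 1 := pow_lt_one₀ hη0.le hη1 (by omega)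
  have h1δ : 0 < 1 - δ := by linarith
  have hκK : κ ≤ K := by
    rw [hKdef]
    calc κ = 1 * κ := by ring
      _ ≤ (n-1) * κ := Nat.mul_le_mul (by omega) le_rfl
  clear hKdef
  -- entries of any column are in [0,1]
  have hub : ∀ m, s ≤ m → ∀ i' j' : Fin n, transitionMatrix W m s i' j' ≤ 1 := by
    intro m hm i' j'
    have hcol := tm_col W hWcol hm j'
    calc transitionMatrix W m s i' j' ≤ ∑ i'', transitionMatrix W m s i'' j' :=
        Finset.single_le_sum (fun c _ => tm_nonneg W hWnonneg hm c j') (Finset.mem_univ i')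
      _ = 1 := hcol
  -- key oscillation bound
  have key : ∀ m, s ≤ m →
      Finset.univ.sup' hne (fun i' => transitionMatrix W m s i' j)
        - Finset.univ.inf' hne (fun i' => transitionMatrix W m s i' j)
      ≤ (1 - δ) ^ ((m - s + 1) / K) := by
    intro m
    induction m using Nat.strong_induction_on with
    | _ m ih =>
      intro hsm
      by_cases hq : m - s + 1 < K
      · rw [Nat.div_eq_of_lt hq, pow_zero]
        have h1 : Finset.univ.sup' hne (fun i' => transitionMatrix W m s i' j) ≤ 1 :=
          Finset.sup'_le hne _ fun i' _ => hub m hsm i' j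
        have h2 : (0:ℝ) ≤ Finset.univ.inf' hne (fun i' => transitionMatrix W m s i' j) :=
          Finset.le_inf' hne _ fun i' _ => tm_nonneg W hWnonneg hsm i' j
        linarith
      · push_neg at hq
        by_cases hms : s + K ≤ m
        · set p := m - K with hp
          have hms' : s ≤ p := by omega
          have hpm : p < m := by omega
          have hsplit := tm_split W (s := s) (m := p) (k := m) hms' (by omega)
          have hblock : ∀ i' j', δ ≤ transitionMatrix W m (p+1) i' j' := by
            intro i' j'
            have := tm_block_pos W hη0.le hWnonneg hWdiag hκK hκ hconn (p+1) i' j'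
            rwa [show p + 1 + K - 1 = m from by omega] at this
          have hrowP : ∀ i', ∑ j', transitionMatrix W m (p+1) i' j' = 1 :=
            tm_row W hWrow (by omega)
          have hmv : (fun i' => transitionMatrix W m s i' j)
              = (transitionMatrix W m (p+1)).mulVec (fun c => transitionMatrix W p s c j) := by
            funext i'
            rw [hsplit]
            simp [Matrix.mul_apply, Matrix.mulVec, dotProduct]
          have hc := osc_contract hne hδ0.le hblock hrowP (fun c => transitionMatrix W p s c j)
          rw [← hmv] at hc
          have hih := ih p hpm hms'
          have hexp : (m - s + 1) / K = (p - s + 1) / K + 1 := by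
            rw [Nat.div_eq_sub_div (by omega) (by omega : K ≤ m - s + 1)]
            congr 2
            omega
          rw [hexp, pow_succ]
          have hosc0 : (0:ℝ) ≤ (1-δ) := h1δ.le
          calc Finset.univ.sup' hne (fun i' => transitionMatrix W m s i' j)
              - Finset.univ.inf' hne (fun i' => transitionMatrix W m s i' j)
              ≤ (1-δ) * (Finset.univ.sup' hne (fun c => transitionMatrix W p s c j)
                  - Finset.univ.inf' hne (fun c => transitionMatrix W p s c j)) := hc
            _ ≤ (1-δ) * (1-δ) ^ ((p - s + 1)/K) := by
                exact mul_le_mul_of_nonneg_left hih hosc0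
            _ = (1-δ) ^ ((p - s + 1)/K) * (1-δ) := by ring
        · -- m < s + K and K ≤ m - s + 1 : exactly one block
          have hLK : m - s + 1 = K := by omega
          rw [hLK, Nat.div_self (by omega), pow_one]
          have hblock : ∀ i' j', δ ≤ transitionMatrix W m s i' j' := by
            intro i' j'
            have := tm_block_pos W hη0.le hWnonneg hWdiag hκK hκ hconn s i' j'
            rwa [show s + K - 1 = m from by omega] at this
          have h1 : Finset.univ.sup' hne (fun i' => transitionMatrix W m s i' j) ≤ 1 :=
            Finset.sup'_le hne _ fun i' _ => hub m hsm i' j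
          have h2 : δ ≤ Finset.univ.inf' hne (fun i' => transitionMatrix W m s i' j) :=
            Finset.le_inf' hne _ fun i' _ => hblock i' j
          linarith
  -- relate |entry - 1/n| to oscillation
  set Msup := Finset.univ.sup' hne (fun i' => transitionMatrix W k s i' j) with hMs
  set minf := Finset.univ.inf' hne (fun i' => transitionMatrix W k s i' j) with hmi
  have hskle : s ≤ k := hsk.le
  have hcolsum : ∑ i', transitionMatrix W k s i' j = 1 := tm_col W hWcol hskle j
  have hn0 : (0:ℝ) < n := by positivity
  have hinf_le : minf ≤ 1 / n := by
    have : (n:ℝ) * minf ≤ 1 := by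
      calc (n:ℝ) * minf = ∑ _i' : Fin n, minf := by
            simp [Finset.sum_const, Finset.card_univ, mul_comm]
        _ ≤ ∑ i', transitionMatrix W k s i' j :=
            Finset.sum_le_sum fun i' _ =>
              Finset.inf'_le (fun i'' => transitionMatrix W k s i'' j) (Finset.mem_univ i')
        _ = 1 := hcolsum
    rw [le_div_iff₀ hn0]; linarith [this]
  have hsup_ge : 1 / n ≤ Msup := by
    have : (1:ℝ) ≤ n * Msup := by
      calc (1:ℝ) = ∑ i', transitionMatrix W k s i' j := hcolsum.symm
        _ ≤ ∑ _i' : Fin n, Msup :=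
            Finset.sum_le_sum fun i' _ =>
              Finset.le_sup' (fun i'' => transitionMatrix W k s i'' j) (Finset.mem_univ i')
        _ = n * Msup := by simp [Finset.sum_const, Finset.card_univ, mul_comm]
    rw [div_le_iff₀ hn0]; linarith [this]
  have habs : |transitionMatrix W k s i j - 1 / n| ≤ Msup - minf := by
    have h1 : transitionMatrix W k s i j ≤ Msup :=
      Finset.le_sup' (fun i'' => transitionMatrix W k s i'' j) (Finset.mem_univ i)
    have h2 : minf ≤ transitionMatrix W k s i j :=
      Finset.inf'_le (fun i'' => transitionMatrix W k s i'' j) (Finset.mem_univ i)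
    rw [abs_le]; constructor <;> [linarith; linarith]
  -- arithmetic conclusion
  set q : ℕ := (k - s + 1) / K with hqdef
  have hkey := key k hskle
  -- q ≥ (k-s)/K - 1 over ℝ
  have hqK : k - s < K * (q + 1) := by
    have hmod := Nat.div_add_mod (k - s + 1) K
    rw [← hqdef] at hmod
    have hmodlt : (k - s + 1) % K < K := Nat.mod_lt _ (by omega)
    have hKq : K * (q + 1) = K * q + K := by ring
    omega
  have hK0 : (0:ℝ) < (K:ℝ) := by exact_mod_cast (by omega : 0 < K)
  have hexpq : ((k:ℝ) - s) / K - 1 ≤ (q:ℝ) := by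
    have hqK' : k < K * (q + 1) + s := by omega
    have hc : (k:ℝ) < (K:ℝ) * ((q:ℝ) + 1) + s := by exact_mod_cast hqK'
    rw [sub_le_iff_le_add, div_le_iff₀ hK0]
    nlinarith
  -- rewrite RHS via rpow
  have hksr : ((k - s : ℕ) : ℝ) = (k:ℝ) - s := by rw [Nat.cast_sub hskle]
  have hrhs : (2 * (1 + δ⁻¹) / (1 - δ)) * ((1 - δ) ^ ((K : ℝ)⁻¹)) ^ (k - s)
      = 2 * (1 + δ⁻¹) * (1 - δ) ^ (((k:ℝ) - s) / K - 1) := by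
    rw [← Real.rpow_natCast ((1 - δ) ^ ((K:ℝ)⁻¹)) (k - s), ← Real.rpow_mul h1δ.le,
      Real.rpow_sub h1δ, Real.rpow_one, hksr]
    rw [show (K:ℝ)⁻¹ * ((k:ℝ) - s) = ((k:ℝ) - s) / K from by ring]
    ring
  rw [hrhs]
  calc |transitionMatrix W k s i j - 1 / (n:ℝ)| ≤ Msup - minf := habs
    _ ≤ (1 - δ) ^ q := hkey
    _ = (1 - δ) ^ ((q:ℕ):ℝ) := by rw [Real.rpow_natCast]
    _ ≤ (1 - δ) ^ (((k:ℝ) - s) / K - 1) :=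
        Real.rpow_le_rpow_of_exponent_ge h1δ (by linarith) hexpq
    _ ≤ 2 * (1 + δ⁻¹) * (1 - δ) ^ (((k:ℝ) - s) / K - 1) := by
        have hpos : (0:ℝ) ≤ (1 - δ) ^ (((k:ℝ) - s) / K - 1) := Real.rpow_nonneg h1δ.le _
        have hcoef : (1:ℝ) ≤ 2 * (1 + δ⁻¹) := by
          have : (0:ℝ) < δ⁻¹ := by positivity
          linarith
        nlinarith
end

section
/- (Second-moment bound on the two-sided randomized difference) Let f : ℝ^m → ℝ be L-Lipschitz with respect to the Euclidean norm, let x ∈ ℝ^m and c > 0. Let Δ = (Δ^1, ..., Δ^m) be a random vector with |Δ^p| ≤ a and |1/Δ^p| ≤ b almost surely for every component p, and let ε be a real random variable independent of Δ with E[ε²] ≤ e². Define the randomized difference d = [f(x + cΔ) − f(x − cΔ) + ε] Δ⁻ / (2c), where Δ⁻ = (1/Δ^1, ..., 1/Δ^m). Then E‖d‖₂² ≤ (m a b L + (√m b e)/(2c))². -/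
open MeasureTheory ProbabilityTheory

/-- The two-sided randomized difference
`d = [f(x + cΔ) − f(x − cΔ) + ε] Δ⁻ / (2c)`, where `Δ⁻` is the vector of
componentwise reciprocals of `Δ`. -/
noncomputable def twoSidedDiff {m : ℕ} (f : EuclideanSpace ℝ (Fin m) → ℝ) (c : ℝ)
    (x Δ : EuclideanSpace ℝ (Fin m)) (e : ℝ) : EuclideanSpace ℝ (Fin m) :=
  ((f (x + c • Δ) - f (x - c • Δ) + e) / (2 * c)) •
    (WithLp.toLp 2 (fun p => (Δ p)⁻¹) : EuclideanSpace ℝ (Fin m))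

/-!
Since `f` is `L`-Lipschitz, `|f(x + cΔ) − f(x − cΔ)| ≤ 2cL‖Δ‖`, so pointwise
`‖d‖ ≤ (L‖Δ‖ + |ε|/(2c)) ‖Δ⁻‖ ≤ √m b (√m a L + |ε|/(2c))`, the coordinate bounds giving
`‖Δ‖ ≤ √m a` and `‖Δ⁻‖ ≤ √m b`. Squaring and integrating, the cross term is controlled by
`E|ε| ≤ √(E ε²) ≤ e`.
-/

theorem EuclideanSpace.norm_le_sqrt_card_mul {ι : Type*} [Fintype ι] {v : EuclideanSpace ℝ ι}
    {r : ℝ} (hr : 0 ≤ r) (h : ∀ i, |v i| ≤ r) : ‖v‖ ≤ √(Fintype.card ι) * r := by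
  rw [EuclideanSpace.norm_eq, ← Real.sqrt_sq hr, ← Real.sqrt_mul (Nat.cast_nonneg _)]
  gcongr
  calc ∑ i, ‖v i‖ ^ 2 ≤ ∑ _i : ι, r ^ 2 :=
        Finset.sum_le_sum fun i _ => by rw [Real.norm_eq_abs]; gcongr; exact h i
    _ = Fintype.card ι * r ^ 2 := by simp

section Moments

variable {Ω : Type*} [MeasurableSpace Ω] {μ : Measure Ω} [IsProbabilityMeasure μ] {X : Ω → ℝ}

lemma integral_abs_le_of_integral_sq_le {e : ℝ} (he : 0 ≤ e) (hX : MemLp X 2 μ)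
    (h : ∫ ω, X ω ^ 2 ∂μ ≤ e ^ 2) : ∫ ω, |X ω| ∂μ ≤ e := by
  have hvar := variance_eq_sub (μ := μ) hX.abs
  simp only [Pi.pow_apply, Pi.abs_apply, sq_abs] at hvar
  have := variance_nonneg |X| μ
  exact abs_le_of_sq_le_sq' (by linarith) he |>.2

lemma integral_sq_const_add_mul_abs_le {K t e : ℝ} (hK : 0 ≤ K) (ht : 0 ≤ t) (he : 0 ≤ e)
    (hX : MemLp X 2 μ) (h : ∫ ω, X ω ^ 2 ∂μ ≤ e ^ 2) :
    ∫ ω, (K + t * |X ω|) ^ 2 ∂μ ≤ (K + t * e) ^ 2 := by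
  have hX1 : Integrable (fun ω => |X ω|) μ := (hX.integrable one_le_two).abs
  have hX2 : Integrable (fun ω => X ω ^ 2) μ := hX.integrable_sq
  calc ∫ ω, (K + t * |X ω|) ^ 2 ∂μ
      = K ^ 2 + 2 * K * t * ∫ ω, |X ω| ∂μ + t ^ 2 * ∫ ω, X ω ^ 2 ∂μ := by
        simp only [add_sq, mul_pow, sq_abs]
        rw [integral_add ?_ (hX2.const_mul _),
          integral_add (integrable_const _) ((hX1.const_mul t).const_mul _),
          integral_const, integral_const_mul, integral_const_mul, integral_const_mul]
        · simp [mul_assoc]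
        · exact (integrable_const _).add ((hX1.const_mul t).const_mul _)
    _ ≤ K ^ 2 + 2 * K * t * e + t ^ 2 * e ^ 2 := by
        gcongr
        exact integral_abs_le_of_integral_sq_le he hX h
    _ = (K + t * e) ^ 2 := by ring

end Moments

lemma norm_twoSidedDiff_le {m : ℕ} {f : EuclideanSpace ℝ (Fin m) → ℝ} {L c : ℝ} (hc : 0 < c)
    (hf : ∀ x y : EuclideanSpace ℝ (Fin m), |f x - f y| ≤ L * ‖x - y‖)
    (x Δ : EuclideanSpace ℝ (Fin m)) (e : ℝ) :
    ‖twoSidedDiff f c x Δ e‖ ≤ (L * ‖Δ‖ + (2 * c)⁻¹ * |e|) *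
      ‖(WithLp.toLp 2 (fun p => (Δ p)⁻¹) : EuclideanSpace ℝ (Fin m))‖ := by
  have hdiff : |f (x + c • Δ) - f (x - c • Δ)| ≤ 2 * c * (L * ‖Δ‖) := by
    have := hf (x + c • Δ) (x - c • Δ)
    rwa [show x + c • Δ - (x - c • Δ) = (2 * c) • Δ by module, norm_smul,
      Real.norm_of_nonneg (by positivity), mul_left_comm] at this
  rw [twoSidedDiff, norm_smul, Real.norm_eq_abs, abs_div, abs_of_pos (by positivity : 0 < 2 * c)]
  gcongr
  calc |f (x + c • Δ) - f (x - c • Δ) + e| / (2 * c)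
      ≤ (2 * c * (L * ‖Δ‖) + |e|) / (2 * c) := by
        gcongr; exact (abs_add_le _ _).trans (by gcongr)
    _ = L * ‖Δ‖ + (2 * c)⁻¹ * |e| := by field_simp

lemma norm_twoSidedDiff_le_of_forall_abs_le {m : ℕ} {f : EuclideanSpace ℝ (Fin m) → ℝ}
    {L a b c : ℝ} (hL : 0 ≤ L) (ha : 0 ≤ a) (hb : 0 ≤ b) (hc : 0 < c)
    (hf : ∀ x y : EuclideanSpace ℝ (Fin m), |f x - f y| ≤ L * ‖x - y‖)
    (x Δ : EuclideanSpace ℝ (Fin m)) (e : ℝ) (hΔ : ∀ p, |Δ p| ≤ a ∧ |(Δ p)⁻¹| ≤ b) :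
    ‖twoSidedDiff f c x Δ e‖ ≤ √m * b * (L * (√m * a) + (2 * c)⁻¹ * |e|) := by
  have hΔa : ‖Δ‖ ≤ √m * a := by
    simpa using EuclideanSpace.norm_le_sqrt_card_mul ha fun p => (hΔ p).1
  have hΔb : ‖(WithLp.toLp 2 (fun p => (Δ p)⁻¹) : EuclideanSpace ℝ (Fin m))‖ ≤ √m * b := by
    simpa using EuclideanSpace.norm_le_sqrt_card_mul hb fun p => (hΔ p).2
  rw [mul_comm (√m * b)]
  exact (norm_twoSidedDiff_le hc hf x Δ e).trans (by gcongr)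

theorem twoSidedDiff_second_moment_bound_general
    {Ω : Type*} [MeasurableSpace Ω] (μ : Measure Ω) [IsProbabilityMeasure μ]
    (m : ℕ) (f : EuclideanSpace ℝ (Fin m) → ℝ) (L a b c e : ℝ)
    (hL : 0 < L) (ha : 0 < a) (hb : 0 < b) (hc : 0 < c) (he : 0 < e)
    (hf : ∀ x y : EuclideanSpace ℝ (Fin m), |f x - f y| ≤ L * ‖x - y‖)
    (x : EuclideanSpace ℝ (Fin m))
    (Δ : Ω → EuclideanSpace ℝ (Fin m)) (ε : Ω → ℝ)
    (hΔbound : ∀ᵐ ω ∂μ, ∀ p, |Δ ω p| ≤ a ∧ |(Δ ω p)⁻¹| ≤ b)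
    (hεmem : MemLp ε 2 μ) (hε2 : ∫ ω, (ε ω) ^ 2 ∂μ ≤ e ^ 2) :
    ∫ ω, ‖twoSidedDiff f c x (Δ ω) (ε ω)‖ ^ 2 ∂μ ≤
      (m * a * b * L + Real.sqrt m * b * e / (2 * c)) ^ 2 := by
  set s := √(m : ℝ)
  have hpt : ∀ᵐ ω ∂μ, ‖twoSidedDiff f c x (Δ ω) (ε ω)‖ ^ 2 ≤
      (s * b) ^ 2 * (L * (s * a) + (2 * c)⁻¹ * |ε ω|) ^ 2 := by
    filter_upwards [hΔbound] with ω hω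
    rw [← mul_pow]
    gcongr
    exact norm_twoSidedDiff_le_of_forall_abs_le hL.le ha.le hb.le hc hf x (Δ ω) (ε ω) hω
  have hεabs : MemLp (fun ω => |ε ω|) 2 μ := hεmem.abs
  have hmem : MemLp (fun ω => L * (s * a) + (2 * c)⁻¹ * |ε ω|) 2 μ :=
    (memLp_const (L * (s * a))).add (hεabs.const_mul (2 * c)⁻¹)
  have hint : Integrable (fun ω => (s * b) ^ 2 * (L * (s * a) + (2 * c)⁻¹ * |ε ω|) ^ 2) μ :=
    hmem.integrable_sq.const_mul _
  calc ∫ ω, ‖twoSidedDiff f c x (Δ ω) (ε ω)‖ ^ 2 ∂μ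
      ≤ ∫ ω, (s * b) ^ 2 * (L * (s * a) + (2 * c)⁻¹ * |ε ω|) ^ 2 ∂μ :=
        -- a non-integrable left side has integral `0`, so its integrability is not needed
        integral_mono_of_nonneg (ae_of_all _ fun _ => by positivity) hint hpt
    _ = (s * b) ^ 2 * ∫ ω, (L * (s * a) + (2 * c)⁻¹ * |ε ω|) ^ 2 ∂μ := integral_const_mul _ _
    _ ≤ (s * b) ^ 2 * (L * (s * a) + (2 * c)⁻¹ * e) ^ 2 := by
        gcongr
        exact integral_sq_const_add_mul_abs_le (by positivity) (by positivity) he.le hεmem hε2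
    _ = (m * a * b * L + s * b * e / (2 * c)) ^ 2 := by
        have hss : s * s = m := Real.mul_self_sqrt (Nat.cast_nonneg m)
        rw [← mul_pow]
        congr 1
        field_simp
        linear_combination (2 * c * a * L) * hss

/-- Second-moment bound on the two-sided randomized difference:
`E‖d‖₂² ≤ (m a b L + √m b e / (2c))²`. -/
theorem twoSidedDiff_second_moment_bound
    {Ω : Type*} [MeasurableSpace Ω] (μ : Measure Ω) [IsProbabilityMeasure μ]
    (m : ℕ) (f : EuclideanSpace ℝ (Fin m) → ℝ) (L a b c e : ℝ)
    (hL : 0 < L) (ha : 0 < a) (hb : 0 < b) (hc : 0 < c) (he : 0 < e)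
    (hf : ∀ x y : EuclideanSpace ℝ (Fin m), |f x - f y| ≤ L * ‖x - y‖)
    (x : EuclideanSpace ℝ (Fin m))
    (Δ : Ω → EuclideanSpace ℝ (Fin m)) (ε : Ω → ℝ)
    (hΔmeas : Measurable Δ) (hεmeas : Measurable ε)
    (hΔne : ∀ᵐ ω ∂μ, ∀ p, Δ ω p ≠ 0)
    (hΔbound : ∀ᵐ ω ∂μ, ∀ p, |Δ ω p| ≤ a ∧ |(Δ ω p)⁻¹| ≤ b)
    (hindep : IndepFun ε Δ μ)
    (hεmem : MemLp ε 2 μ) (hε2 : ∫ ω, (ε ω) ^ 2 ∂μ ≤ e ^ 2) :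
    ∫ ω, ‖twoSidedDiff f c x (Δ ω) (ε ω)‖ ^ 2 ∂μ ≤
      (m * a * b * L + Real.sqrt m * b * e / (2 * c)) ^ 2 :=
  twoSidedDiff_second_moment_bound_general μ m f L a b c e hL ha hb hc he hf x Δ ε hΔbound hεmem hε2
end
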